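/- arXiv:0906.1862 — 3 statements merged into one kernel-verified Lean document; each statement's English description precedes it below -/
import Mathlib

section
/- For every nonnegative integer k, the limit as ε → 0 of (ε−k)_{2k+1} / (2ε−2k)_{2k+1} equals (−1)^k · (k!)^2 / (2·(2k)!), which also equals (−1)^k · k! / (2^{2k+1} · (1/2)_k). -/
open Filter Topology

/-!
The numerator `(ε - k)_{2k+1}` and the denominator `(2ε - 2k)_{2k+1}` each contain exactly one
factor vanishing at `ε = 0`, namely `ε` and `2ε`. Cancelling `ε` leaves a ratio of polynomials
whose denominator `2 (-2k)_{2k}` is nonzero, so the limit is its value at `0`, computed with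
`(-n)_n = (-1)^n n!` and `(1)_n = n!`. The second form follows from `(1/2)_k 4^k k! = (2k)!`.
-/

/-- Pochhammer symbol (rising factorial). -/
noncomputable def poch (x : ℂ) (n : ℕ) : ℂ := (ascPochhammer ℂ n).eval x

@[fun_prop]
lemma continuous_poch (n : ℕ) : Continuous fun x => poch x n :=
  (ascPochhammer ℂ n).continuous

lemma poch_zero (x : ℂ) : poch x 0 = 1 := by simp [poch]

lemma poch_one (x : ℂ) : poch x 1 = x := by simp [poch]

lemma poch_add (x : ℂ) (m n : ℕ) : poch x (m + n) = poch x m * poch (x + m) n := by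
  simpa [poch, Polynomial.eval_comp] using
    (congrArg (Polynomial.eval x) (ascPochhammer_mul ℂ m n)).symm

lemma poch_succ (x : ℂ) (n : ℕ) : poch x (n + 1) = poch x n * (x + n) := by
  rw [poch_add, poch_one]

lemma poch_one_left (n : ℕ) : poch 1 n = n.factorial := by simp [poch]

lemma poch_neg_natCast_self (n : ℕ) : poch (-n) n = (-1) ^ n * n.factorial := by
  rw [poch, ascPochhammer_eval_neg_eq_descPochhammer, descPochhammer_eval_eq_descFactorial,
    Nat.descFactorial_self]

lemma poch_sub_natCast_add_one_add (x : ℂ) (n m : ℕ) :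
    poch (x - n) (n + 1 + m) = x * (poch (x - n) n * poch (x + 1) m) := by
  rw [poch_add, poch_add, sub_add_cancel, poch_one]
  push_cast
  ring

lemma poch_half_mul (k : ℕ) : poch (1 / 2) k * (4 ^ k * k.factorial) = (2 * k).factorial := by
  induction k with
  | zero => simp [poch_zero]
  | succ k ih =>
    rw [poch_succ, Nat.factorial_succ, show 2 * (k + 1) = 2 * k + 1 + 1 by ring,
      Nat.factorial_succ, Nat.factorial_succ]
    push_cast
    linear_combination (2 * (2 * (k : ℂ) + 1) * (k + 1)) * ih

lemma tendsto_mul_div_mul_nhdsNE {𝕜 : Type*} [NormedField 𝕜] {f g : 𝕜 → 𝕜}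
    (hf : ContinuousAt f 0) (hg : ContinuousAt g 0) (hg₀ : g 0 ≠ 0) :
    Tendsto (fun x => x * f x / (x * g x)) (𝓝[≠] 0) (𝓝 (f 0 / g 0)) :=
  ((hf.div hg hg₀).tendsto.mono_left nhdsWithin_le_nhds).congr'
    (eventually_nhdsWithin_of_forall fun _ hx => (mul_div_mul_left _ _ hx).symm)

/-- For every nonnegative integer `k`, the limit as `ε → 0` (along `ε ≠ 0`) of
`(ε−k)_{2k+1} / (2ε−2k)_{2k+1}` equals `(−1)^k (k!)^2 / (2 (2k)!)`,
which also equals `(−1)^k k! / (2^{2k+1} (1/2)_k)`. -/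
theorem limit_poch_ratio (k : ℕ) :
    Tendsto (fun ε : ℂ => poch (ε - k) (2*k+1) / poch (2*ε - 2*k) (2*k+1))
      (𝓝[≠] 0) (𝓝 ((-1)^k * ((Nat.factorial k : ℂ))^2 / (2 * (Nat.factorial (2*k) : ℂ)))) ∧
    (-1:ℂ)^k * ((Nat.factorial k : ℂ))^2 / (2 * (Nat.factorial (2*k) : ℂ)) =
      (-1)^k * (Nat.factorial k : ℂ) / (2^(2*k+1) * poch (1/2) k) := by
  constructor
  · have hnum (ε : ℂ) :
        poch (ε - k) (2 * k + 1) = ε * (poch (ε - k) k * poch (ε + 1) k) := by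
      rw [show 2 * k + 1 = k + 1 + k by ring, poch_sub_natCast_add_one_add]
    have hden (ε : ℂ) :
        poch (2 * ε - 2 * k) (2 * k + 1) = ε * (2 * poch (2 * ε - 2 * k) (2 * k)) := by
      have := poch_sub_natCast_add_one_add (2 * ε) (2 * k) 0
      push_cast at this
      rw [this, poch_zero]
      ring
    simp_rw [hnum, hden]
    have hpole : (2 * 0 - 2 * k : ℂ) = -↑(2 * k) := by push_cast; ring
    convert tendsto_mul_div_mul_nhdsNE (f := fun ε => poch (ε - k) k * poch (ε + 1) k)
      (g := fun ε => 2 * poch (2 * ε - 2 * k) (2 * k)) (by fun_prop) (by fun_prop) ?_ using 2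
    · simp only [zero_sub, zero_add, hpole, poch_neg_natCast_self, poch_one_left, pow_mul]
      ring
    · rw [hpole, poch_neg_natCast_self]
      simp [Nat.factorial_ne_zero]
  · have hfac := poch_half_mul k
    have hpoch : poch (1 / 2) k ≠ 0 :=
      left_ne_zero_of_mul (hfac ▸ Nat.cast_ne_zero.2 (Nat.factorial_ne_zero _))
    rw [← hfac, pow_succ (2 : ℂ), pow_mul]
    field_simp
    norm_num
end

section
/- Chaundy's identity: for complex a, b with a+b+1/2 and 3/2−a−b not nonpositive integers, the product ₂F₁(a, b; a+b+1/2; z) · ₂F₁(1/2−a, 1/2−b; 3/2−a−b; z) equals ₃F₂(1/2, a−b+1/2, b−a+1/2; a+b+1/2, 3/2−a−b; z), as an identity of formal power series in z. -/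
/-- Coefficient of `z^k` in the Gauss series `₂F₁(a,b;c;z)`. -/
noncomputable def coeff2F1 (a b c : ℂ) (k : ℕ) : ℂ :=
  poch a k * poch b k / (poch c k * (Nat.factorial k : ℂ))

/-- Coefficient of `z^k` in `₃F₂(a₁,a₂,a₃;b₁,b₂;z)`. -/
noncomputable def coeff3F2 (a₁ a₂ a₃ b₁ b₂ : ℂ) (k : ℕ) : ℂ :=
  poch a₁ k * poch a₂ k * poch a₃ k / (poch b₁ k * poch b₂ k * (Nat.factorial k : ℂ))

open Finset

theorem eq_of_mul_succ_eq_mul {M : Type*} [MonoidWithZero M] [IsLeftCancelMulZero M]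
    {p q u v : ℕ → M} (hp : ∀ k, p k ≠ 0) (hu : ∀ k, p k * u (k + 1) = q k * u k)
    (hv : ∀ k, p k * v (k + 1) = q k * v k) (h0 : u 0 = v 0) : u = v := by
  funext k
  induction k with
  | zero => exact h0
  | succ k ih => exact mul_left_cancel₀ (hp k) (by rw [hu, hv, ih])

theorem mul_sum_range_succ_eq_of_telescoping {R : Type*} [CommRing R] {t s P : ℕ → R} {p q : R}
    {n : ℕ} (hstep : ∀ i < n, p * t i - q * s i = P (i + 1) * t (i + 1) - P i * t i)
    (hP0 : P 0 = 0) (hPn : P n = -p) :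
    p * ∑ i ∈ range (n + 1), t i = q * ∑ i ∈ range n, s i := by
  have htele : ∑ i ∈ range n, (p * t i - q * s i) = P n * t n - P 0 * t 0 := by
    rw [← sum_range_sub (fun i ↦ P i * t i)]
    exact sum_congr rfl fun i hi ↦ hstep i (mem_range.mp hi)
  rw [sum_sub_distrib, ← mul_sum, ← mul_sum, hP0, hPn] at htele
  rw [sum_range_succ]
  linear_combination htele

theorem add_natCast_ne_zero_of_forall_ne_neg {c : ℂ} (hc : ∀ j : ℕ, c ≠ -j) (n : ℕ) :
    c + n ≠ 0 :=
  fun h ↦ hc n (eq_neg_of_add_eq_zero_left h)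

theorem coeff2F1_zero (a b c : ℂ) : coeff2F1 a b c 0 = 1 := by
  simp [coeff2F1, poch]

theorem coeff3F2_zero (a₁ a₂ a₃ b₁ b₂ : ℂ) : coeff3F2 a₁ a₂ a₃ b₁ b₂ 0 = 1 := by
  simp [coeff3F2, poch]

theorem mul_coeff2F1_succ (a b c : ℂ) {i : ℕ} (hc : c + i ≠ 0) :
    (c + i) * (i + 1) * coeff2F1 a b c (i + 1) = (a + i) * (b + i) * coeff2F1 a b c i := by
  unfold coeff2F1 poch
  simp only [ascPochhammer_succ_eval, Nat.factorial_succ]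
  push_cast
  rcases eq_or_ne ((ascPochhammer ℂ i).eval c) 0 with h | h
  · simp [h]
  · field_simp

theorem mul_coeff3F2_succ (a₁ a₂ a₃ b₁ b₂ : ℂ) {k : ℕ} (hb₁ : b₁ + k ≠ 0) (hb₂ : b₂ + k ≠ 0) :
    (b₁ + k) * (b₂ + k) * (k + 1) * coeff3F2 a₁ a₂ a₃ b₁ b₂ (k + 1) =
      (a₁ + k) * (a₂ + k) * (a₃ + k) * coeff3F2 a₁ a₂ a₃ b₁ b₂ k := by
  unfold coeff3F2 poch
  simp only [ascPochhammer_succ_eval, Nat.factorial_succ]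
  push_cast
  rcases eq_or_ne ((ascPochhammer ℂ k).eval b₁) 0 with h₁ | h₁
  · simp [h₁]
  rcases eq_or_ne ((ascPochhammer ℂ k).eval b₂) 0 with h₂ | h₂
  · simp [h₂]
  field_simp

noncomputable def chaundyCertificate (a b : ℂ) (k m : ℕ) : ℂ :=
  m * ((a + b - 1/2) * (a + b - 3 * k - 7/2) + 3 * (a + b - k - 3/2) * m + 2 * m ^ 2)

theorem chaundy_term_telescopes (a b : ℂ) {i k : ℕ} (hik : i ≤ k)
    (h1 : a + b + 1/2 + i ≠ 0) (h2 : 3/2 - a - b + (k - i : ℕ) ≠ 0) :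
    (a + b + 1/2 + k) * (3/2 - a - b + k) * (k + 1) *
        (coeff2F1 a b (a+b+1/2) i * coeff2F1 (1/2-a) (1/2-b) (3/2-a-b) (k + 1 - i)) -
      (1/2 + k) * (a - b + 1/2 + k) * (b - a + 1/2 + k) *
        (coeff2F1 a b (a+b+1/2) i * coeff2F1 (1/2-a) (1/2-b) (3/2-a-b) (k - i)) =
      chaundyCertificate a b k (i + 1) * (coeff2F1 a b (a+b+1/2) (i + 1) *
          coeff2F1 (1/2-a) (1/2-b) (3/2-a-b) (k + 1 - (i + 1))) -
        chaundyCertificate a b k i *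
          (coeff2F1 a b (a+b+1/2) i * coeff2F1 (1/2-a) (1/2-b) (3/2-a-b) (k + 1 - i)) := by
  obtain ⟨j, rfl⟩ := Nat.exists_eq_add_of_le hik
  rw [show i + j + 1 - i = j + 1 by omega, show i + j + 1 - (i + 1) = j by omega,
    show i + j - i = j by omega] at *
  set A := coeff2F1 a b (a+b+1/2)
  set B := coeff2F1 (1/2-a) (1/2-b) (3/2-a-b)
  have hA := mul_coeff2F1_succ a b (a+b+1/2) h1
  have hB := mul_coeff2F1_succ (1/2-a) (1/2-b) (3/2-a-b) h2
  have hden : (a+b+1/2+i) * (i+1) * ((3/2-a-b+j) * (j+1)) ≠ 0 :=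
    mul_ne_zero (mul_ne_zero h1 (Nat.cast_add_one_ne_zero i))
      (mul_ne_zero h2 (Nat.cast_add_one_ne_zero j))
  apply mul_right_cancel₀ hden
  linear_combination (norm := skip)
    (-chaundyCertificate a b (i + j) (i + 1) * B j * ((3/2-a-b+j) * (j+1))) * hA
    + (((a+b+1/2+(i+j : ℕ)) * (3/2-a-b+(i+j : ℕ)) * ((i+j : ℕ)+1)
        + chaundyCertificate a b (i + j) i) * A i * ((a+b+1/2+i) * (i+1))) * hB
  unfold chaundyCertificate
  push_cast
  ring

theorem chaundy_convolution_recurrence (a b : ℂ)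
    (h1 : ∀ j : ℕ, a + b + 1/2 ≠ -(j:ℂ)) (h2 : ∀ j : ℕ, 3/2 - a - b ≠ -(j:ℂ)) (k : ℕ) :
    (a + b + 1/2 + k) * (3/2 - a - b + k) * (k + 1) * ∑ i ∈ range (k + 2),
        coeff2F1 a b (a+b+1/2) i * coeff2F1 (1/2-a) (1/2-b) (3/2-a-b) (k + 1 - i) =
      (1/2 + k) * (a - b + 1/2 + k) * (b - a + 1/2 + k) * ∑ i ∈ range (k + 1),
        coeff2F1 a b (a+b+1/2) i * coeff2F1 (1/2-a) (1/2-b) (3/2-a-b) (k - i) := by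
  refine mul_sum_range_succ_eq_of_telescoping (P := chaundyCertificate a b k)
    (fun i hi ↦ chaundy_term_telescopes a b (Nat.lt_succ_iff.mp hi)
      (add_natCast_ne_zero_of_forall_ne_neg h1 i) (add_natCast_ne_zero_of_forall_ne_neg h2 _))
    (by simp [chaundyCertificate]) ?_
  unfold chaundyCertificate
  push_cast
  ring

/-- Chaundy's identity:
`₂F₁(a,b;a+b+1/2;z) ₂F₁(1/2−a,1/2−b;3/2−a−b;z) = ₃F₂(1/2,a−b+1/2,b−a+1/2;a+b+1/2,3/2−a−b;z)`
as formal power series. -/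
theorem chaundy_identity (a b : ℂ)
    (h1 : ∀ j : ℕ, a + b + 1/2 ≠ -(j:ℂ)) (h2 : ∀ j : ℕ, 3/2 - a - b ≠ -(j:ℂ)) :
    ∀ k : ℕ, ∑ i ∈ Finset.range (k+1),
        coeff2F1 a b (a+b+1/2) i * coeff2F1 (1/2-a) (1/2-b) (3/2-a-b) (k-i) =
      coeff3F2 (1/2) (a-b+1/2) (b-a+1/2) (a+b+1/2) (3/2-a-b) k := by
  refine congrFun (eq_of_mul_succ_eq_mul (fun k ↦ ?_) (chaundy_convolution_recurrence a b h1 h2)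
    (fun k ↦ ?_) (by simp [coeff2F1_zero, coeff3F2_zero]))
  · exact mul_ne_zero (mul_ne_zero (add_natCast_ne_zero_of_forall_ne_neg h1 k)
      (add_natCast_ne_zero_of_forall_ne_neg h2 k)) (Nat.cast_add_one_ne_zero k)
  · exact mul_coeff3F2_succ _ _ _ _ _ (add_natCast_ne_zero_of_forall_ne_neg h1 k)
      (add_natCast_ne_zero_of_forall_ne_neg h2 k)
end

section
/- The square y(z) = ₂F₁(a,b;c;z)² satisfies, as a formal power series (or analytic function on |z|<1), the third-order equation z(θ+2a)(θ+2b)(θ+a+b)y − θ(θ+c−1)(θ+2c−2)y + ((2a+2b−2c+1)z/(z−1))·((a+b−c+1)θ + 2ab)y = 0, where θ = z·d/dz, assuming c is not a nonpositive integer. -/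
/-- The square of the Gauss hypergeometric series, `y(z) = ₂F₁(a,b;c;z)²`. -/
noncomputable def hyp2F1sq (a b c : ℂ) : ℂ → ℂ := fun z =>
  (∑' k : ℕ, poch a k * poch b k / (poch c k * (Nat.factorial k : ℂ)) * z ^ k) ^ 2

/-- The Euler operator `θ = z d/dz`. -/
noncomputable def eulerOp (f : ℂ → ℂ) : ℂ → ℂ := fun z => z * deriv f z

open FormalMultilinearSeries Filter Topology Finset

section PowerSeries

lemma le_radius_ofScalars_natCast_mul (g : ℕ → ℂ) :
    (ofScalars ℂ g).radius ≤ (ofScalars ℂ fun k => (k : ℂ) * g k).radius := by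
  refine ENNReal.le_of_forall_nnreal_lt fun r hr => ?_
  obtain ⟨s, hrs, hs⟩ := ENNReal.lt_iff_exists_nnreal_btwn.mp hr
  have hrs' : (r : ℝ) < s := by exact_mod_cast hrs
  have hs0 : (0 : ℝ) < s := lt_of_le_of_lt r.2 hrs'
  have hgeom : Tendsto (fun k : ℕ => (k : ℝ) * ((r : ℝ) / s) ^ k) atTop (𝓝 0) :=
    tendsto_self_mul_const_pow_of_lt_one (by positivity) ((div_lt_one hs0).mpr hrs')
  have hg := ((ofScalars ℂ g).summable_norm_mul_pow hs).tendsto_atTop_zero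
  simp only [ofScalars_norm] at hg
  refine (ofScalars ℂ fun k => (k : ℂ) * g k).le_radius_of_tendsto (l := 0) ?_
  have hprod := hgeom.mul hg
  rw [zero_mul] at hprod
  refine hprod.congr fun k => ?_
  rw [ofScalars_norm, norm_mul, Complex.norm_natCast, div_pow]
  field_simp

lemma one_le_radius_ofScalars_natCast_pow_mul {g : ℕ → ℂ} (hg : 1 ≤ (ofScalars ℂ g).radius)
    (j : ℕ) : 1 ≤ (ofScalars ℂ fun k => (k : ℂ) ^ j * g k).radius := by
  induction j with
  | zero => simpa using hg
  | succ j ih =>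
    refine ih.trans ((le_radius_ofScalars_natCast_mul _).trans_eq ?_)
    simp only [pow_succ', mul_assoc]

lemma enorm_lt_radius_of_one_le {p : FormalMultilinearSeries ℂ ℂ ℂ} (hp : 1 ≤ p.radius) {z : ℂ}
    (hz : ‖z‖ < 1) : ‖z‖ₑ < p.radius := by
  rw [← ofReal_norm]
  exact (ENNReal.ofReal_lt_one.mpr hz).trans_le hp

lemma eulerOp_ofScalarsSum {g : ℕ → ℂ} {z : ℂ} (hz : ‖z‖ₑ < (ofScalars ℂ g).radius) :
    eulerOp (ofScalarsSum g) z = ofScalarsSum (fun k => (k : ℂ) * g k) z := by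
  let p := ofScalars ℂ g
  have hderiv : eulerOp (ofScalarsSum g) z = p.derivSeries.sum z z := by
    rw [eulerOp, ofScalarsSum, (p.hasFDerivAt_sum hz).hasDerivAt.deriv, ← smul_eq_mul,
      ← map_smul, smul_eq_mul, mul_one]
  have hmem : z ∈ Metric.eball (0 : ℂ) p.derivSeries.radius :=
    mem_eball_zero_iff.mpr (hz.trans_le p.radius_le_radius_derivSeries)
  have hsum := (ContinuousLinearMap.apply ℂ ℂ z).hasSum (p.derivSeries.hasSum hmem)
  simp only [ContinuousLinearMap.apply_apply, derivSeries_apply_diag, p, ofScalars_apply_eq,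
    smul_eq_mul, nsmul_eq_mul] at hsum
  rw [hderiv, ofScalars_sum_eq]
  refine (((hasSum_nat_add_iff' 1).mp ?_).tsum_eq).symm
  simpa [mul_assoc] using hsum

/-- `θʲ` applied to `∑ g k zᵏ`, inside the disk of convergence. -/
noncomputable def thetaPowSum (g : ℕ → ℂ) (j : ℕ) : ℂ → ℂ :=
  ofScalarsSum fun k => (k : ℂ) ^ j * g k

lemma hasSum_thetaPowSum {g : ℕ → ℂ} (hg : 1 ≤ (ofScalars ℂ g).radius) (j : ℕ) {z : ℂ}
    (hz : ‖z‖ < 1) : HasSum (fun k : ℕ => (k : ℂ) ^ j * g k * z ^ k) (thetaPowSum g j z) := by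
  have hz' := enorm_lt_radius_of_one_le (one_le_radius_ofScalars_natCast_pow_mul hg j) hz
  simpa only [thetaPowSum, ofScalarsSum, ofScalars_apply_eq, smul_eq_mul] using
    (ofScalars ℂ fun k => (k : ℂ) ^ j * g k).hasSum (mem_eball_zero_iff.mpr hz')

lemma HasSum.eq_mul_of_succ_eq {u v : ℕ → ℂ} {s t z : ℂ} (hu : HasSum (fun k => u k * z ^ k) s)
    (hv : HasSum (fun k => v k * z ^ k) t) (h0 : u 0 = 0) (hsucc : ∀ k, u (k + 1) = v k) :
    s = z * t := by
  have hshift := (hasSum_nat_add_iff' 1).mpr hu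
  simp only [range_one, sum_singleton, h0, zero_mul, sub_zero, hsucc] at hshift
  have hterm : (fun k => v k * z ^ (k + 1)) = fun k => z * (v k * z ^ k) := by
    funext k
    ring
  rw [hterm] at hshift
  exact hshift.unique (hv.mul_left z)

end PowerSeries

section EulerTower

lemma Filter.EventuallyEq.eulerOp_eq {f g : ℂ → ℂ} {z : ℂ} (h : f =ᶠ[𝓝 z] g) :
    eulerOp f z = eulerOp g z := by
  simp only [eulerOp, h.deriv_eq]

def IsEulerTowerOn (F : ℕ → ℂ → ℂ) (U : Set ℂ) : Prop :=
  ∀ n, ∀ w ∈ U, DifferentiableAt ℂ (F n) w ∧ eulerOp (F n) w = F (n + 1) w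

lemma isEulerTowerOn_thetaPowSum {g : ℕ → ℂ} (hg : 1 ≤ (ofScalars ℂ g).radius) :
    IsEulerTowerOn (thetaPowSum g) (Metric.ball 0 1) := by
  intro n w hw
  have hw' := enorm_lt_radius_of_one_le (one_le_radius_ofScalars_natCast_pow_mul hg n)
    (mem_ball_zero_iff.mp hw)
  refine ⟨((ofScalars ℂ fun k => (k : ℂ) ^ n * g k).hasFDerivAt_sum hw').differentiableAt, ?_⟩
  rw [thetaPowSum, eulerOp_ofScalarsSum hw', thetaPowSum]
  congr 1
  funext k
  ring

/-- The Leibniz rule `θⁿ(fg) = ∑ᵢ₊ⱼ₌ₙ (n choose i) θⁱf θʲg`, taken as a definition. -/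
noncomputable def leibnizMul (F G : ℕ → ℂ → ℂ) (n : ℕ) (w : ℂ) : ℂ :=
  ∑ ij ∈ antidiagonal n, (n.choose ij.1 : ℂ) * (F ij.1 w * G ij.2 w)

variable {F G : ℕ → ℂ → ℂ} {U : Set ℂ}

lemma IsEulerTowerOn.mul (hF : IsEulerTowerOn F U) (hG : IsEulerTowerOn G U) :
    IsEulerTowerOn (leibnizMul F G) U := by
  intro n w hw
  have hd : HasDerivAt (leibnizMul F G n) (∑ ij ∈ antidiagonal n, (n.choose ij.1 : ℂ) *
      (deriv (F ij.1) w * G ij.2 w + F ij.1 w * deriv (G ij.2) w)) w :=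
    HasDerivAt.fun_sum fun ij _ =>
      ((hF ij.1 w hw).1.hasDerivAt.mul (hG ij.2 w hw).1.hasDerivAt).const_mul _
  refine ⟨hd.differentiableAt, ?_⟩
  rw [eulerOp, hd.deriv, leibnizMul, sum_antidiagonal_choose_succ_mul (fun i j => F i w * G j w),
    mul_sum, ← sum_add_distrib]
  refine sum_congr rfl fun ij hij => ?_
  rw [Nat.choose_symm_of_eq_add (mem_antidiagonal.mp hij).symm, ← (hF ij.1 w hw).2,
    ← (hG ij.2 w hw).2, eulerOp, eulerOp]
  ring

lemma IsEulerTowerOn.add_const_mul (hF : IsEulerTowerOn F U) (d : ℂ) :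
    IsEulerTowerOn (fun n w => F (n + 1) w + d * F n w) U := by
  intro n w hw
  have hd := (hF (n + 1) w hw).1.hasDerivAt.fun_add ((hF n w hw).1.hasDerivAt.const_mul d)
  refine ⟨hd.differentiableAt, ?_⟩
  beta_reduce
  rw [eulerOp, hd.deriv, ← (hF (n + 1) w hw).2, ← (hF n w hw).2, eulerOp, eulerOp]
  ring

lemma IsEulerTowerOn.eulerOp_eq_of_eqOn (hF : IsEulerTowerOn F U) (hU : IsOpen U) {f : ℂ → ℂ}
    (hf : Set.EqOn f (F 0) U) {z : ℂ} (hz : z ∈ U) : eulerOp f z = F 1 z :=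
  (hf.eventuallyEq_of_mem (hU.mem_nhds hz)).eulerOp_eq.trans (hF 0 z hz).2

lemma IsEulerTowerOn.eqOn_eulerOp_add_const_mul (hF : IsEulerTowerOn F U) (hU : IsOpen U)
    {f : ℂ → ℂ} (hf : Set.EqOn f (F 0) U) (d : ℂ) :
    Set.EqOn (fun w => eulerOp f w + d * f w) (fun w => F 1 w + d * F 0 w) U := fun w hw => by
  simp only [hF.eulerOp_eq_of_eqOn hU hf hw, hf hw]

lemma IsEulerTowerOn.eulerOp_cubic (hF : IsEulerTowerOn F U) (hU : IsOpen U) {f : ℂ → ℂ}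
    (hf : Set.EqOn f (F 0) U) (d e e' : ℂ) {z : ℂ} (hz : z ∈ U) :
    let L₁ : ℂ → ℂ := fun w => eulerOp f w + d * f w
    let L₂ : ℂ → ℂ := fun w => eulerOp L₁ w + e * L₁ w
    eulerOp L₂ z + e' * L₂ z = F 3 z + (d + e + e') * F 2 z +
      (d * e + d * e' + e * e') * F 1 z + d * e * e' * F 0 z := by
  intro L₁ L₂
  have hL₁ := hF.eqOn_eulerOp_add_const_mul hU hf d
  have hL₂ := (hF.add_const_mul d).eqOn_eulerOp_add_const_mul hU hL₁ e
  refine (((hF.add_const_mul d).add_const_mul e).eqOn_eulerOp_add_const_mul hU hL₂ e' hz).trans ?_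
  simp only [Nat.reduceAdd]
  ring

end EulerTower

section HypergeometricRecurrence

variable {f : ℕ → ℂ} {a b c : ℂ} (hf : 1 ≤ (ofScalars ℂ f).radius)
  (hrec : ∀ k : ℕ, ((k : ℂ) + 1) * (k + c) * f (k + 1) = (k + a) * (k + b) * f k)
include hf hrec

lemma thetaPowSum_hypergeometricODE {z : ℂ} (hz : ‖z‖ < 1) :
    thetaPowSum f 2 z + (c - 1) * thetaPowSum f 1 z =
      z * (thetaPowSum f 2 z + (a + b) * thetaPowSum f 1 z + a * b * thetaPowSum f 0 z) := by
  have h := fun j => hasSum_thetaPowSum hf j hz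
  refine HasSum.eq_mul_of_succ_eq (u := fun k => ((k : ℂ) ^ 2 + (c - 1) * k) * f k)
    (v := fun k => ((k : ℂ) ^ 2 + (a + b) * k + a * b) * f k) ?_ ?_ (by simp) fun k => ?_
  · convert (h 2).add ((h 1).mul_left (c - 1)) using 1
    funext k
    ring
  · convert ((h 2).add ((h 1).mul_left (a + b))).add ((h 0).mul_left (a * b)) using 1
    funext k
    ring
  · push_cast
    linear_combination hrec k

lemma thetaPowSum_hypergeometricODE_euler {z : ℂ} (hz : ‖z‖ < 1) :
    thetaPowSum f 3 z + (c - 1) * thetaPowSum f 2 z =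
      z * (thetaPowSum f 3 z + (a + b + 1) * thetaPowSum f 2 z +
        (a * b + a + b) * thetaPowSum f 1 z + a * b * thetaPowSum f 0 z) := by
  have h := fun j => hasSum_thetaPowSum hf j hz
  refine HasSum.eq_mul_of_succ_eq (u := fun k => ((k : ℂ) ^ 3 + (c - 1) * k ^ 2) * f k)
    (v := fun k => ((k : ℂ) ^ 3 + (a + b + 1) * k ^ 2 + (a * b + a + b) * k + a * b) * f k)
    ?_ ?_ (by simp) fun k => ?_
  · convert (h 3).add ((h 2).mul_left (c - 1)) using 1
    funext k
    ring
  · convert (((h 3).add ((h 2).mul_left (a + b + 1))).add ((h 1).mul_left (a * b + a + b))).add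
      ((h 0).mul_left (a * b)) using 1
    funext k
    ring
  · push_cast
    linear_combination ((k : ℂ) + 1) * hrec k

end HypergeometricRecurrence

section Gauss

variable {a b c : ℂ}

lemma ascPochhammer_eval_ne_zero (hc : ∀ j : ℕ, c ≠ -(j : ℂ)) (n : ℕ) :
    (ascPochhammer ℂ n).eval c ≠ 0 := by
  rw [ne_eq, ascPochhammer_eval_eq_zero_iff]
  rintro ⟨k, -, hk⟩
  exact hc k (by rw [hk, neg_neg])

lemma ordinaryHypergeometricCoefficient_succ (hc : ∀ j : ℕ, c ≠ -(j : ℂ)) (k : ℕ) :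
    ((k : ℂ) + 1) * (k + c) * ordinaryHypergeometricCoefficient a b c (k + 1) =
      (k + a) * (k + b) * ordinaryHypergeometricCoefficient a b c k := by
  have hck : c + k ≠ 0 := fun h => hc k (by linear_combination h)
  have hpoch := ascPochhammer_eval_ne_zero hc k
  have hfact : (k.factorial : ℂ) ≠ 0 := Nat.cast_ne_zero.mpr k.factorial_ne_zero
  have hk1 : (k : ℂ) + 1 ≠ 0 := Nat.cast_add_one_ne_zero k
  simp only [ordinaryHypergeometricCoefficient, ascPochhammer_succ_eval, Nat.factorial_succ,
    Nat.cast_mul, Nat.cast_add_one]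
  field_simp
  ring

lemma one_le_radius_ordinaryHypergeometricSeries (hc : ∀ j : ℕ, c ≠ -(j : ℂ)) :
    1 ≤ (ordinaryHypergeometricSeries ℂ a b c).radius := by
  by_cases ha : ∃ k : ℕ, a = -k
  · obtain ⟨k, rfl⟩ := ha
    simp [ordinaryHypergeometric_radius_top_of_neg_nat₁]
  by_cases hb : ∃ k : ℕ, b = -k
  · obtain ⟨k, rfl⟩ := hb
    simp [ordinaryHypergeometric_radius_top_of_neg_nat₂]
  push Not at ha hb
  refine (ordinaryHypergeometricSeries_radius_eq_one ℂ a b c fun k => ?_).ge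
  refine ⟨fun h => ha k ?_, fun h => hb k ?_, fun h => hc k ?_⟩ <;> linear_combination h

lemma hyp2F1sq_eq_sq_thetaPowSum (a b c : ℂ) :
    hyp2F1sq a b c = fun z => thetaPowSum (ordinaryHypergeometricCoefficient a b c) 0 z ^ 2 := by
  funext z
  simp only [hyp2F1sq, thetaPowSum, ofScalars_sum_eq, pow_zero, one_mul, smul_eq_mul, poch]
  congr 1
  refine tsum_congr fun k => ?_
  rw [div_eq_mul_inv, mul_inv]
  ring

end Gauss

/-- `y = ₂F₁(a,b;c;z)²` satisfies the symmetric tensor square equation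
`z(θ+2a)(θ+2b)(θ+a+b)y − θ(θ+c−1)(θ+2c−2)y
  + ((2a+2b−2c+1)z/(z−1))((a+b−c+1)θ y + 2ab y) = 0` on the unit disk. -/
theorem hyp2F1_sq_symmetric_square_ode (a b c : ℂ) (hc : ∀ j : ℕ, c ≠ -(j:ℂ)) :
    ∀ z : ℂ, ‖z‖ < 1 →
      (let y := hyp2F1sq a b c
       let L₁ : ℂ → ℂ := fun w => eulerOp y w + (a + b) * y w
       let L₂ : ℂ → ℂ := fun w => eulerOp L₁ w + 2*b * L₁ w
       let M₁ : ℂ → ℂ := fun w => eulerOp y w + (2*c - 2) * y w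
       let M₂ : ℂ → ℂ := fun w => eulerOp M₁ w + (c - 1) * M₁ w
       z * (eulerOp L₂ z + 2*a * L₂ z) - eulerOp M₂ z +
         ((2*a + 2*b - 2*c + 1) * z / (z - 1)) *
           ((a + b - c + 1) * eulerOp y z + 2*a*b * y z) = 0) := by
  intro z hz y L₁ L₂ M₁ M₂
  have hf := one_le_radius_ordinaryHypergeometricSeries (a := a) (b := b) hc
  set F := thetaPowSum (ordinaryHypergeometricCoefficient a b c)
  have hz' : z ∈ Metric.ball (0 : ℂ) 1 := mem_ball_zero_iff.mpr hz
  have hY := (isEulerTowerOn_thetaPowSum hf).mul (isEulerTowerOn_thetaPowSum hf)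
  have hy : Set.EqOn y (leibnizMul F F 0) (Metric.ball 0 1) := fun w _ => by
    simp [y, hyp2F1sq_eq_sq_thetaPowSum, leibnizMul, sq, F]
  have hL : eulerOp L₂ z + 2 * a * L₂ z = _ :=
    hY.eulerOp_cubic Metric.isOpen_ball hy (a + b) (2 * b) (2 * a) hz'
  have hM : eulerOp M₂ z + 0 * M₂ z = _ :=
    hY.eulerOp_cubic Metric.isOpen_ball hy (2 * c - 2) (c - 1) 0 hz'
  rw [zero_mul, add_zero] at hM
  rw [hL, hM, hY.eulerOp_eq_of_eqOn Metric.isOpen_ball hy hz', hy hz']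
  simp only [leibnizMul, Nat.reduceAdd, Nat.sum_antidiagonal_succ, Nat.choose_zero_right,
    Nat.cast_one, one_mul, zero_add, Nat.choose_one_right, Nat.cast_ofNat,
    Nat.choose_succ_self_right, HasAntidiagonal.antidiagonal_zero, sum_singleton, Nat.choose_self]
  have hR1 := thetaPowSum_hypergeometricODE hf (ordinaryHypergeometricCoefficient_succ hc) hz
  have hR2 := thetaPowSum_hypergeometricODE_euler hf (ordinaryHypergeometricCoefficient_succ hc) hz
  have hz1 : z - 1 ≠ 0 := fun h => by simp [sub_eq_zero.mp h] at hz
  field_simp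
  linear_combination (2 * (1 - z) * F 0 z) * hR2 +
    (6 * (1 - z) * F 1 z + (4 * c - 4 + 2 * z - 4 * z * b - 4 * z * a) * F 0 z) * hR1
end
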